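/- arXiv:2310.11229 — 8 statements merged into one kernel-verified Lean document; each statement's English description precedes it below -/
import Mathlib

section
/- Let I ⊆ (0,∞) be an open interval, h : I → ℝ smooth and positive, T : I → ℝ smooth with 1 − h(s)²·T′(s)² > 0 on I, and let h_T, a_T, b_T be the coefficient functions of the spacelike warped product graph M_T. If the graph is totally umbilic, i.e. h_T(s)·a_T(s) = b_T(s) for all s ∈ I (so that K^T = b_T·g^T), then b_T is constant on I and there exists a constant C ≥ 0 with b_T² = C and h_T(s) − h(s) = C·s² for all s ∈ I. (Corollary 3.3: totally umbilic spacelike warped product graphs are hyperboloids with constant umbilicity factor.) -/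
/-!
Differentiating `b_T = f³ T' / (s √(1 - h² T'²))` and comparing with the formulas for `h_T` and
`a_T` gives `b_T' = (h_T a_T - b_T) / s`, so umbilicity forces `b_T` to be constant on the
interval. Independently of umbilicity, `h_T - h = h³ T'² / (1 - h² T'²) = s² b_T²`, so `C = b_T²`.
-/

open Set Real

namespace SpacelikeGraph

noncomputable def hCoeff (h T : ℝ → ℝ) (s : ℝ) : ℝ :=
  h s / (1 - h s ^ 2 * deriv T s ^ 2)

noncomputable def aCoeff (h T : ℝ → ℝ) (s : ℝ) : ℝ :=
  (√(h s) * deriv (deriv T) s +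
      deriv (fun r => √(h r)) s * deriv T s * (3 - h s ^ 2 * deriv T s ^ 2)) /
    √(1 - h s ^ 2 * deriv T s ^ 2)

noncomputable def bCoeff (h T : ℝ → ℝ) (s : ℝ) : ℝ :=
  √(h s) ^ 3 * deriv T s / (s * √(1 - h s ^ 2 * deriv T s ^ 2))

variable {h T : ℝ → ℝ} {s : ℝ}

theorem hCoeff_sub_eq_bCoeff_sq_mul (hs : s ≠ 0) (hpos : 0 < h s)
    (hspc : 0 < 1 - h s ^ 2 * deriv T s ^ 2) :
    hCoeff h T s - h s = bCoeff h T s ^ 2 * s ^ 2 := by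
  have hF2 : √(h s) ^ 2 = h s := sq_sqrt hpos.le
  have hS2 : √(1 - h s ^ 2 * deriv T s ^ 2) ^ 2 = 1 - h s ^ 2 * deriv T s ^ 2 := sq_sqrt hspc.le
  rw [hCoeff, bCoeff, div_pow, mul_pow, mul_pow, hS2,
    show √(h s) ^ 3 = √(h s) ^ 2 * √(h s) by ring, mul_pow, hF2]
  field_simp
  ring

theorem hasDerivAt_bCoeff (hs : s ≠ 0) (hpos : 0 < h s)
    (hspc : 0 < 1 - h s ^ 2 * deriv T s ^ 2) (hh : DifferentiableAt ℝ h s)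
    (hT : DifferentiableAt ℝ (deriv T) s) :
    HasDerivAt (bCoeff h T) ((hCoeff h T s * aCoeff h T s - bCoeff h T s) / s) s := by
  have hdh := hh.hasDerivAt
  have hdT := hT.hasDerivAt
  have hdF := hdh.sqrt hpos.ne'
  have hdS := ((hasDerivAt_const s (1 : ℝ)).sub ((hdh.pow 2).mul (hdT.pow 2))).sqrt hspc.ne'
  have hSpos : 0 < √(1 - h s ^ 2 * deriv T s ^ 2) := sqrt_pos.2 hspc
  refine (((hdF.pow 3).mul hdT).div ((hasDerivAt_id s).mul hdS)
    (mul_ne_zero hs hSpos.ne') : HasDerivAt (bCoeff h T) _ s).congr_deriv ?_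
  simp only [hCoeff, aCoeff, bCoeff, hdF.deriv, Pi.mul_apply, Pi.pow_apply, Pi.sub_apply, id_eq]
  have hFpos : 0 < √(h s) := sqrt_pos.2 hpos
  have hF2 : √(h s) ^ 2 = h s := sq_sqrt hpos.le
  have hS2 := sq_sqrt hspc.le
  set F := √(h s)
  set S := √(1 - h s ^ 2 * deriv T s ^ 2)
  rw [← hF2] at hS2 ⊢
  generalize deriv h s = dh, deriv T s = t1, deriv (deriv T) s = t2 at *
  rw [← hS2]
  field_simp
  linear_combination (3 * F ^ 2 * dh * t1 * s + 2 * F ^ 4 * t2 * s) * hS2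

end SpacelikeGraph

/-- Corollary 3.3: totally umbilic spacelike warped product graphs are hyperboloids
with constant umbilicity factor. -/
theorem totally_umbilic_spacelike_graph_is_hyperboloid
    (a b : ℝ) (h T hT aT bT : ℝ → ℝ)
    (hI : Ioo a b ⊆ Ioi 0)
    (hhsm : ContDiffOn ℝ (⊤ : ℕ∞) h (Ioo a b))
    (hhpos : ∀ s ∈ Ioo a b, 0 < h s)
    (hTsm : ContDiffOn ℝ (⊤ : ℕ∞) T (Ioo a b))
    (hspc : ∀ s ∈ Ioo a b, 0 < 1 - (h s) ^ 2 * (deriv T s) ^ 2)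
    (hhT : ∀ s ∈ Ioo a b, hT s = h s / (1 - (h s) ^ 2 * (deriv T s) ^ 2))
    (haT : ∀ s ∈ Ioo a b, aT s =
      (Real.sqrt (h s) * deriv (deriv T) s +
        deriv (fun r => Real.sqrt (h r)) s * deriv T s * (3 - (h s) ^ 2 * (deriv T s) ^ 2)) /
      Real.sqrt (1 - (h s) ^ 2 * (deriv T s) ^ 2))
    (hbT : ∀ s ∈ Ioo a b, bT s =
      (Real.sqrt (h s)) ^ 3 * deriv T s / (s * Real.sqrt (1 - (h s) ^ 2 * (deriv T s) ^ 2)))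
    (humb : ∀ s ∈ Ioo a b, hT s * aT s = bT s) :
    (∀ s ∈ Ioo a b, ∀ t ∈ Ioo a b, bT s = bT t) ∧
    ∃ C : ℝ, 0 ≤ C ∧ ∀ s ∈ Ioo a b, bT s ^ 2 = C ∧ hT s - h s = C * s ^ 2 := by
  have hbT_flat : ∀ s ∈ Ioo a b, HasDerivAt (SpacelikeGraph.bCoeff h T) 0 s := by
    intro s hs
    have hU := isOpen_Ioo.mem_nhds hs
    have humb_s : SpacelikeGraph.hCoeff h T s * SpacelikeGraph.aCoeff h T s =
        SpacelikeGraph.bCoeff h T s := by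
      have := humb s hs
      rwa [hhT s hs, haT s hs, hbT s hs] at this
    have hh := (hhsm.differentiableOn (by simp)).differentiableAt hU
    have hT' := ((hTsm.deriv_of_isOpen (m := 1) isOpen_Ioo
      (WithTop.coe_le_coe.2 le_top)).differentiableOn (by simp)).differentiableAt hU
    simpa only [humb_s, sub_self, zero_div] using
      SpacelikeGraph.hasDerivAt_bCoeff (hI hs).ne' (hhpos s hs) (hspc s hs) hh hT'
  have hbT_const : ∀ s ∈ Ioo a b, ∀ t ∈ Ioo a b, bT s = bT t := fun s hs t ht => by
    rw [hbT s hs, hbT t ht]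
    exact isOpen_Ioo.is_const_of_deriv_eq_zero isPreconnected_Ioo
      (fun x hx => (hbT_flat x hx).differentiableAt.differentiableWithinAt)
      (fun x hx => (hbT_flat x hx).deriv) hs ht
  refine ⟨hbT_const, bT ((a + b) / 2) ^ 2, sq_nonneg _, fun s hs => ?_⟩
  have hmid : (a + b) / 2 ∈ Ioo a b := ⟨by linarith [hs.1, hs.2], by linarith [hs.1, hs.2]⟩
  rw [hbT_const _ hmid s hs, hhT s hs, hbT s hs]
  exact ⟨rfl,
    SpacelikeGraph.hCoeff_sub_eq_bCoeff_sq_mul (hI hs).ne' (hhpos s hs) (hspc s hs)⟩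
end

section
/- Let I ⊆ (0,∞) be an open interval, h : I → ℝ smooth and positive, T : I → ℝ smooth with 1 − h(s)²·T′(s)² > 0 on I, and let h_T, a_T, b_T be the coefficient functions of the spacelike warped product graph M_T. Then h_T(s)·a_T(s)·b_T(s) = (h_T′(s) − h′(s))/(2s) for all s ∈ I. (Lemma 3.1, second identity.) -/
open Set Real

/-!
With `u = h`, `v = T′`, `D = 1 - u²v²`, differentiating `h_T = u / D` gives
`h_T′ - h′ = u²v (h′v(3 - u²v²) + 2uT″) / D²`, using `D + 2 = 3 - u²v²`.
On the other side `f′ = h′ / (2f)` and `f² = u`, so all square roots cancel in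
`h_T a_T b_T`, which becomes the same expression divided by `2s`.
-/

lemma hasDerivAt_div_one_sub_sq_mul_sq {u v : ℝ → ℝ} {A w s : ℝ}
    (hu : HasDerivAt u A s) (hv : HasDerivAt v w s) (hD : 1 - u s ^ 2 * v s ^ 2 ≠ 0) :
    HasDerivAt (fun r => u r / (1 - u r ^ 2 * v r ^ 2))
      (A + u s ^ 2 * v s * (A * v s * (3 - u s ^ 2 * v s ^ 2) + 2 * u s * w) /
        (1 - u s ^ 2 * v s ^ 2) ^ 2) s := by
  refine (hu.div (((hu.pow 2).mul (hv.pow 2)).const_sub 1) hD).congr_deriv ?_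
  simp only [Pi.mul_apply, Pi.pow_apply]
  field_simp
  ring

lemma spacelike_graph_coeff_prod_eq (s u v A w : ℝ) (hu : 0 < u) (hD : 0 < 1 - u ^ 2 * v ^ 2) :
    u / (1 - u ^ 2 * v ^ 2) *
      ((√u * w + A / (2 * √u) * v * (3 - u ^ 2 * v ^ 2)) / √(1 - u ^ 2 * v ^ 2)) *
      (√u ^ 3 * v / (s * √(1 - u ^ 2 * v ^ 2))) =
    u ^ 2 * v * (A * v * (3 - u ^ 2 * v ^ 2) + 2 * u * w) / (1 - u ^ 2 * v ^ 2) ^ 2 / (2 * s) := by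
  obtain ⟨p, hp, rfl⟩ : ∃ p, 0 < p ∧ u = p ^ 2 := ⟨√u, sqrt_pos.mpr hu, (sq_sqrt hu.le).symm⟩
  have hq2 : √(1 - (p ^ 2) ^ 2 * v ^ 2) ^ 2 = 1 - (p ^ 2) ^ 2 * v ^ 2 := sq_sqrt hD.le
  have hq : √(1 - (p ^ 2) ^ 2 * v ^ 2) ≠ 0 := (sqrt_pos.mpr hD).ne'
  generalize √(1 - (p ^ 2) ^ 2 * v ^ 2) = q at hq hq2
  rw [sqrt_sq hp.le, ← hq2]
  field_simp
  ring

lemma ContDiffOn.hasDerivAt_deriv {f : ℝ → ℝ} {U : Set ℝ} {s : ℝ}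
    (hf : ContDiffOn ℝ 2 f U) (hU : IsOpen U) (hs : s ∈ U) :
    HasDerivAt (deriv f) (deriv (deriv f) s) s :=
  (((hf.deriv_of_isOpen hU (m := 1) (by norm_num)).differentiableOn one_ne_zero).differentiableAt
    (hU.mem_nhds hs)).hasDerivAt

theorem spacelike_graph_hT_aT_bT_general
    (a b : ℝ) (h T hT aT bT : ℝ → ℝ)
    (hhsm : ContDiffOn ℝ (⊤ : ℕ∞) h (Ioo a b))
    (hhpos : ∀ s ∈ Ioo a b, 0 < h s)
    (hTsm : ContDiffOn ℝ (⊤ : ℕ∞) T (Ioo a b))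
    (hspc : ∀ s ∈ Ioo a b, 0 < 1 - (h s) ^ 2 * (deriv T s) ^ 2)
    (hhT : ∀ s ∈ Ioo a b, hT s = h s / (1 - (h s) ^ 2 * (deriv T s) ^ 2))
    (haT : ∀ s ∈ Ioo a b, aT s =
      (Real.sqrt (h s) * deriv (deriv T) s +
        deriv (fun r => Real.sqrt (h r)) s * deriv T s * (3 - (h s) ^ 2 * (deriv T s) ^ 2)) /
      Real.sqrt (1 - (h s) ^ 2 * (deriv T s) ^ 2))
    (hbT : ∀ s ∈ Ioo a b, bT s =
      (Real.sqrt (h s)) ^ 3 * deriv T s / (s * Real.sqrt (1 - (h s) ^ 2 * (deriv T s) ^ 2))) :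
    ∀ s ∈ Ioo a b, hT s * aT s * bT s = (deriv hT s - deriv h s) / (2 * s) := by
  intro s hs
  have hnhds : Ioo a b ∈ nhds s := isOpen_Ioo.mem_nhds hs
  have hh' : HasDerivAt h (deriv h s) s :=
    ((hhsm.differentiableOn (by simp)).differentiableAt hnhds).hasDerivAt
  have hT'' := (hTsm.of_le (WithTop.coe_le_coe.mpr le_top)).hasDerivAt_deriv isOpen_Ioo hs
  have hhT' : deriv hT s = deriv h s + h s ^ 2 * deriv T s *
      (deriv h s * deriv T s * (3 - h s ^ 2 * deriv T s ^ 2) + 2 * h s * deriv (deriv T) s) /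
        (1 - h s ^ 2 * deriv T s ^ 2) ^ 2 := by
    rw [(Filter.eventuallyEq_of_mem hnhds hhT).deriv_eq]
    exact (hasDerivAt_div_one_sub_sq_mul_sq hh' hT'' (hspc s hs).ne').deriv
  rw [hhT s hs, haT s hs, hbT s hs, hhT', (hh'.sqrt (hhpos s hs).ne').deriv, add_sub_cancel_left]
  exact spacelike_graph_coeff_prod_eq _ _ _ _ _ (hhpos s hs) (hspc s hs)

/-- Lemma 3.1, second identity: hT·aT·bT = (hT′ − h′)/(2s). -/
theorem spacelike_graph_hT_aT_bT
    (a b : ℝ) (h T hT aT bT : ℝ → ℝ)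
    (hI : Ioo a b ⊆ Ioi 0)
    (hhsm : ContDiffOn ℝ (⊤ : ℕ∞) h (Ioo a b))
    (hhpos : ∀ s ∈ Ioo a b, 0 < h s)
    (hTsm : ContDiffOn ℝ (⊤ : ℕ∞) T (Ioo a b))
    (hspc : ∀ s ∈ Ioo a b, 0 < 1 - (h s) ^ 2 * (deriv T s) ^ 2)
    (hhT : ∀ s ∈ Ioo a b, hT s = h s / (1 - (h s) ^ 2 * (deriv T s) ^ 2))
    (haT : ∀ s ∈ Ioo a b, aT s =
      (Real.sqrt (h s) * deriv (deriv T) s +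
        deriv (fun r => Real.sqrt (h r)) s * deriv T s * (3 - (h s) ^ 2 * (deriv T s) ^ 2)) /
      Real.sqrt (1 - (h s) ^ 2 * (deriv T s) ^ 2))
    (hbT : ∀ s ∈ Ioo a b, bT s =
      (Real.sqrt (h s)) ^ 3 * deriv T s / (s * Real.sqrt (1 - (h s) ^ 2 * (deriv T s) ^ 2))) :
    ∀ s ∈ Ioo a b, hT s * aT s * bT s = (deriv hT s - deriv h s) / (2 * s) :=
  spacelike_graph_hT_aT_bT_general a b h T hT aT bT hhsm hhpos hTsm hspc hhT haT hbT
end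

section
/- Let n ≥ 3 be an integer, c ∈ ℝ, I ⊆ (0,∞) an interval, and h : I → ℝ twice differentiable. If ½·h″(r) + ((n−3)/(2r))·h′(r) − ((n−2)/r²)·h(r) + c/r² ≥ 0 for all r ∈ I, then the function F(r) := r^n·(((n−2)/(2r))·h′(r) − ((n−2)/r²)·h(r) + c/r²) is monotone non-decreasing on I. (Lemma 2.2, with c = Ric_{g_N}(X,X) for a fixed unit tangent vector X of the fibre.) -/
/-!
With `E(r)` the left-hand side of the null energy condition, a direct computation gives
`F'(r) = (n - 2) r^(n-1) E(r)`. For `n ≥ 3` and `r > 0` both factors are non-negative,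
so `F` is non-decreasing on the interval by the mean value theorem.
-/

open Set

lemma hasDerivAt_nec_quantity (n : ℤ) (c : ℝ) {h h' h'' : ℝ → ℝ} {r : ℝ} (hr : r ≠ 0)
    (hd1 : HasDerivAt h (h' r) r) (hd2 : HasDerivAt h' (h'' r) r) :
    HasDerivAt (fun r => r ^ n * ((((n : ℝ) - 2) / (2 * r)) * h' r
      - (((n : ℝ) - 2) / r ^ 2) * h r + c / r ^ 2))
      (((n : ℝ) - 2) * r ^ (n - 1) * ((1 / 2) * h'' r + (((n : ℝ) - 3) / (2 * r)) * h' r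
        - (((n : ℝ) - 2) / r ^ 2) * h r + c / r ^ 2)) r := by
  have hr2 : r ^ 2 ≠ 0 := pow_ne_zero 2 hr
  have hsq : HasDerivAt (fun x : ℝ => x ^ 2) (2 * r) r := by
    simpa using hasDerivAt_pow 2 r
  have hF := (hasDerivAt_zpow n r (.inl hr)).fun_mul
    (((((hasDerivAt_const r ((n : ℝ) - 2)).fun_div ((hasDerivAt_id' r).const_mul 2)
      (mul_ne_zero two_ne_zero hr)).fun_mul hd2).fun_sub
      (((hasDerivAt_const r ((n : ℝ) - 2)).fun_div hsq hr2).fun_mul hd1)).fun_add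
      ((hasDerivAt_const r c).fun_div hsq hr2))
  refine hF.congr_deriv ?_
  rw [zpow_sub_one₀ hr]
  field_simp
  ring

/-- Lemma 2.2: under the null energy condition, the quantity
r^n·((n−2)/(2r)·h′ − (n−2)/r²·h + c/r²) is monotone non-decreasing. -/
theorem NEC_monotone_quantity
    (n : ℤ) (hn : 3 ≤ n) (c : ℝ) (I : Set ℝ)
    (hIc : I.OrdConnected) (hIpos : I ⊆ Ioi 0)
    (h h' h'' : ℝ → ℝ)
    (hd1 : ∀ r ∈ I, HasDerivAt h (h' r) r)
    (hd2 : ∀ r ∈ I, HasDerivAt h' (h'' r) r)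
    (hNEC : ∀ r ∈ I, 0 ≤ (1 / 2) * h'' r + (((n : ℝ) - 3) / (2 * r)) * h' r
      - (((n : ℝ) - 2) / r ^ 2) * h r + c / r ^ 2) :
    MonotoneOn (fun r => r ^ n * ((((n : ℝ) - 2) / (2 * r)) * h' r
      - (((n : ℝ) - 2) / r ^ 2) * h r + c / r ^ 2)) I := by
  have hF : ∀ r ∈ I, HasDerivAt _ _ r := fun r hr =>
    hasDerivAt_nec_quantity n c (hIpos hr).ne' (hd1 r hr) (hd2 r hr)
  refine monotoneOn_of_hasDerivWithinAt_nonneg hIc.convex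
    (fun r hr => (hF r hr).continuousAt.continuousWithinAt)
    (fun r hr => (hF r (interior_subset hr)).hasDerivWithinAt) fun r hr => ?_
  have hrI := interior_subset hr
  have hn2 : (0 : ℝ) ≤ (n : ℝ) - 2 := by
    have : (3 : ℝ) ≤ n := by exact_mod_cast hn
    linarith
  exact mul_nonneg (mul_nonneg hn2 (zpow_pos (hIpos hrI) _).le) (hNEC r hrI)
end

section
/- Let n ≥ 3 be an integer, α ∈ ℝ, r_H > 0, and h : [r_H, ∞) → ℝ twice differentiable with h(r_H) = 0 and h′(r_H)·r_H + 2α > 0. If ½·h″(r) + ((n−3)/(2r))·h′(r) − ((n−2)/r²)·h(r) + (n−2)·α/r² ≥ 0 for all r ≥ r_H, then ((n−2)/(2r))·h′(r) − ((n−2)/r²)·h(r) + (n−2)·α/r² > 0 for all r ≥ r_H. (The observation following Lemma 2.2 that Brendle's condition (H4) is implied by the boundary condition h′(r_H)·r_H + 2α > 0 together with the null energy condition.) -/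
/-!
Put `ψ(r) = r h'(r) - 2 h(r) + 2α`. The (H4) expression is `(n - 2) / (2r²) · ψ(r)`, while the
null energy condition says exactly that `r^(n-2) ψ(r)` is nondecreasing: its derivative is
`2 r^(n-1)` times the NEC expression. Since `h(r_H) = 0`, the boundary condition is `ψ(r_H) > 0`,
so `ψ` stays positive on `[r_H, ∞)`.
-/

open Set Real

theorem hasDerivWithinAt_rpow_const_mul {s : Set ℝ} {k r ψ' : ℝ} {ψ : ℝ → ℝ} (hr : r ≠ 0)
    (hψ : HasDerivWithinAt ψ ψ' s r) :
    HasDerivWithinAt (fun x => x ^ k * ψ x) (r ^ (k - 1) * (k * ψ r + r * ψ')) s r := by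
  refine (((hasDerivAt_rpow_const (p := k) (Or.inl hr)).hasDerivWithinAt).mul hψ).congr_deriv ?_
  rw [show r ^ k = r ^ (k - 1) * r by rw [← rpow_add_one hr]; ring_nf]
  ring

theorem pos_of_rpow_mul_deriv_nonneg {a k : ℝ} (ha : 0 < a) {ψ ψ' : ℝ → ℝ}
    (hψ : ∀ r ∈ Ici a, HasDerivWithinAt ψ (ψ' r) (Ici a) r)
    (hineq : ∀ r ∈ Ici a, 0 ≤ k * ψ r + r * ψ' r) (h0 : 0 < ψ a) :
    ∀ r ∈ Ici a, 0 < ψ r := by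
  have hmono : MonotoneOn (fun x => x ^ k * ψ x) (Ici a) := by
    refine monotoneOn_of_hasDerivWithinAt_nonneg (convex_Ici a)
      (f' := fun r => r ^ (k - 1) * (k * ψ r + r * ψ' r))
      (fun r hr =>
        (hasDerivWithinAt_rpow_const_mul (ha.trans_le hr).ne' (hψ r hr)).continuousWithinAt)
      (fun r hr => ?_) (fun r hr => ?_)
    · rw [interior_Ici] at hr ⊢
      have hr' : r ∈ Ici a := Ioi_subset_Ici_self hr
      exact (hasDerivWithinAt_rpow_const_mul (ha.trans hr).ne' (hψ r hr')).mono
        Ioi_subset_Ici_self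
    · rw [interior_Ici] at hr
      exact mul_nonneg (rpow_nonneg (ha.trans hr).le _) (hineq r (Ioi_subset_Ici_self hr))
  intro r hr
  have hr0 : 0 < r := ha.trans_le hr
  have hweighted : a ^ k * ψ a ≤ r ^ k * ψ r := hmono self_mem_Ici hr hr
  exact pos_of_mul_pos_right ((mul_pos (rpow_pos_of_pos ha k) h0).trans_le hweighted)
    (rpow_pos_of_pos hr0 k).le

/-- Brendle's condition (H4) follows from the boundary condition
h′(r_H)·r_H + 2α > 0 together with the null energy condition. -/
theorem H4_from_boundary_condition_and_NEC
    (n : ℤ) (hn : 3 ≤ n) (α rH : ℝ) (hrH : 0 < rH)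
    (h h' h'' : ℝ → ℝ)
    (hd1 : ∀ r ∈ Ici rH, HasDerivWithinAt h (h' r) (Ici rH) r)
    (hd2 : ∀ r ∈ Ici rH, HasDerivWithinAt h' (h'' r) (Ici rH) r)
    (hzero : h rH = 0)
    (hbc : 0 < h' rH * rH + 2 * α)
    (hNEC : ∀ r ∈ Ici rH, 0 ≤ (1 / 2) * h'' r + (((n : ℝ) - 3) / (2 * r)) * h' r
      - (((n : ℝ) - 2) / r ^ 2) * h r + ((n : ℝ) - 2) * α / r ^ 2) :
    ∀ r ∈ Ici rH, 0 < (((n : ℝ) - 2) / (2 * r)) * h' r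
      - (((n : ℝ) - 2) / r ^ 2) * h r + ((n : ℝ) - 2) * α / r ^ 2 := by
  have hn2 : (0 : ℝ) < n - 2 := by
    have : (3 : ℝ) ≤ n := by exact_mod_cast hn
    linarith
  set ψ : ℝ → ℝ := fun r => r * h' r - 2 * h r + 2 * α with hψ
  have hψ_deriv : ∀ r ∈ Ici rH, HasDerivWithinAt ψ (r * h'' r - h' r) (Ici rH) r := by
    intro r hr
    refine ((((hasDerivWithinAt_id r _).mul (hd2 r hr)).sub
      ((hd1 r hr).const_mul 2)).add_const (2 * α)).congr_deriv ?_
    simp only [id]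
    ring
  have hψ_ineq : ∀ r ∈ Ici rH, 0 ≤ ((n : ℝ) - 2) * ψ r + r * (r * h'' r - h' r) := by
    intro r hr
    have hr0 : 0 < r := hrH.trans_le hr
    refine (mul_nonneg (by positivity : (0 : ℝ) ≤ 2 * r ^ 2) (hNEC r hr)).trans_eq ?_
    rw [hψ]
    field_simp
    ring
  have hψ_rH : 0 < ψ rH := by
    simpa [hψ, hzero, mul_comm] using hbc
  intro r hr
  have hr0 : 0 < r := hrH.trans_le hr
  have hH4 : (((n : ℝ) - 2) / (2 * r)) * h' r - (((n : ℝ) - 2) / r ^ 2) * h r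
      + ((n : ℝ) - 2) * α / r ^ 2 = ((n : ℝ) - 2) / (2 * r ^ 2) * ψ r := by
    field_simp
    ring
  rw [hH4]
  exact mul_pos (div_pos hn2 (by positivity))
    (pos_of_rpow_mul_deriv_nonneg hrH hψ_deriv hψ_ineq hψ_rH r hr)
end

section
/- Let I ⊆ (0,∞) be an open interval, h : I → ℝ smooth and positive, T : I → ℝ smooth with 1 − h(s)²·T′(s)² > 0 on I, and let h_T, a_T, b_T be the coefficient functions of the spacelike warped product graph M_T. Then h_T(s)·a_T(s) − b_T(s) − s·b_T′(s) = 0 for all s ∈ I. (The identity proving that the momentum density J_T of the initial data set (M_T, g^T, K^T) vanishes identically; Lemma 4.3 (ii).) -/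
/-!
With `f = √h` we have `s · b_T = G := f³ T′ / √(1 - f⁴ T′²)`, so `b_T + s b_T′ = G′`.
Differentiating `G` directly, the `f⁷ T′² T″` terms cancel and `G′ = h_T a_T` remains.
-/

open Set Real Filter Topology

theorem add_mul_deriv_eq_of_eventuallyEq_div {b G : ℝ → ℝ} {s G' : ℝ} (hs : s ≠ 0)
    (hG : HasDerivAt G G' s) (hb : b =ᶠ[𝓝 s] fun r => G r / r) :
    b s + s * deriv b s = G' := by
  have hdiv : HasDerivAt (fun r => G r / r) ((G' * s - G s * 1) / s ^ 2) s :=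
    hG.div (hasDerivAt_id s) hs
  rw [hb.eq_of_nhds, hb.deriv_eq, hdiv.deriv]
  field_simp
  ring

theorem hasDerivAt_mul_pow_three_div_sqrt {f p : ℝ → ℝ} {s f' p' : ℝ}
    (hf : HasDerivAt f f' s) (hp : HasDerivAt p p' s) (hW : 0 < 1 - f s ^ 4 * p s ^ 2) :
    HasDerivAt (fun r => f r ^ 3 * p r / √(1 - f r ^ 4 * p r ^ 2))
      (f s ^ 2 / (1 - f s ^ 4 * p s ^ 2) *
        ((f s * p' + f' * p s * (3 - f s ^ 4 * p s ^ 2)) / √(1 - f s ^ 4 * p s ^ 2))) s := by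
  have hW' : HasDerivAt (fun r => 1 - f r ^ 4 * p r ^ 2)
      (-(4 * f s ^ 3 * f' * p s ^ 2 + 2 * f s ^ 4 * p s * p')) s :=
    ((hasDerivAt_const s 1).fun_sub ((hf.fun_pow 4).fun_mul (hp.fun_pow 2))).congr_deriv
      (by norm_num; ring)
  have hnum : HasDerivAt (fun r => f r ^ 3 * p r) (3 * f s ^ 2 * f' * p s + f s ^ 3 * p') s :=
    ((hf.fun_pow 3).fun_mul hp).congr_deriv (by norm_num)
  refine (hnum.fun_div (hW'.sqrt hW.ne') (Real.sqrt_pos.2 hW).ne').congr_deriv ?_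
  field_simp
  rw [Real.sq_sqrt hW.le]
  ring

/-- Lemma 4.3 (ii): the identity hT·aT − bT − s·bT′ = 0, i.e. the momentum
density of the spacelike warped product graph vanishes. -/
theorem spacelike_graph_momentum_vanishes
    (a b : ℝ) (h T hT aT bT : ℝ → ℝ)
    (hI : Ioo a b ⊆ Ioi 0)
    (hhsm : ContDiffOn ℝ (⊤ : ℕ∞) h (Ioo a b))
    (hhpos : ∀ s ∈ Ioo a b, 0 < h s)
    (hTsm : ContDiffOn ℝ (⊤ : ℕ∞) T (Ioo a b))
    (hspc : ∀ s ∈ Ioo a b, 0 < 1 - (h s) ^ 2 * (deriv T s) ^ 2)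
    (hhT : ∀ s ∈ Ioo a b, hT s = h s / (1 - (h s) ^ 2 * (deriv T s) ^ 2))
    (haT : ∀ s ∈ Ioo a b, aT s =
      (Real.sqrt (h s) * deriv (deriv T) s +
        deriv (fun r => Real.sqrt (h r)) s * deriv T s * (3 - (h s) ^ 2 * (deriv T s) ^ 2)) /
      Real.sqrt (1 - (h s) ^ 2 * (deriv T s) ^ 2))
    (hbT : ∀ s ∈ Ioo a b, bT s =
      (Real.sqrt (h s)) ^ 3 * deriv T s / (s * Real.sqrt (1 - (h s) ^ 2 * (deriv T s) ^ 2))) :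
    ∀ s ∈ Ioo a b, hT s * aT s - bT s - s * deriv bT s = 0 := by
  intro s hs
  have hnhds : Ioo a b ∈ 𝓝 s := isOpen_Ioo.mem_nhds hs
  have hsq4 : ∀ r ∈ Ioo a b, h r ^ 2 = √(h r) ^ 4 := fun r hr => by
    rw [show 4 = 2 * 2 from rfl, pow_mul, Real.sq_sqrt (hhpos r hr).le]
  have hf : HasDerivAt (fun r => √(h r)) (deriv (fun r => √(h r)) s) s :=
    (((hhsm.differentiableOn (by simp)).differentiableAt hnhds).sqrt (hhpos s hs).ne').hasDerivAt
  have hp : HasDerivAt (deriv T) (deriv (deriv T) s) s :=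
    (((hTsm.deriv_of_isOpen (m := 1) isOpen_Ioo (by norm_cast)).differentiableOn
      (by simp)).differentiableAt hnhds).hasDerivAt
  have hG := hasDerivAt_mul_pow_three_div_sqrt hf hp (by rw [← hsq4 s hs]; exact hspc s hs)
  have hb : bT =ᶠ[𝓝 s] fun r => √(h r) ^ 3 * deriv T r / √(1 - √(h r) ^ 4 * deriv T r ^ 2) / r :=
    eventually_of_mem hnhds fun r hr => by rw [hbT r hr, hsq4 r hr, div_mul_eq_div_div_swap]
  have hsb := add_mul_deriv_eq_of_eventuallyEq_div (hI hs).ne' hG hb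
  rw [Real.sq_sqrt (hhpos s hs).le] at hsb
  rw [hhT s hs, haT s hs, hsq4 s hs]
  linear_combination -hsb
end

section
/- Let n ≥ 3 be an integer, I ⊆ (0,∞) an open interval, h : I → ℝ smooth and positive, T : I → ℝ smooth with 1 − h(s)²·T′(s)² > 0 on I, and let h_T, a_T, b_T be the coefficient functions of the spacelike warped product graph M_T. If the mean curvature tr_{M_T}K^T = h_T·a_T + (n−1)·b_T is identically equal to a constant C on I, then there exists a constant c₁ ∈ ℝ such that b_T(s) = C/n + c₁·s^{−n} and h_T(s) = h(s) + (C·s/n + c₁·s^{1−n})² for all s ∈ I. (The characterization of constant-mean-curvature spacelike warped product graphs; the choice c₁ = 0 recovers the totally umbilic hyperboloids.) -/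
open Set Real

/-!
With `f = √h`, the function `ψ(s) = s · b_T(s) = f³ T' / √(1 - h² T'²)` satisfies `ψ' = h_T a_T`
and `h_T = h + ψ²`. The constant mean curvature condition thus becomes the linear equation
`ψ' + (n - 1) ψ / s = C`, whose solutions are `ψ(s) = C s / n + c₁ s^(1-n)`.
-/

/-- With `u = T'` this is the function `s · b_T(s)`. -/
noncomputable def graphFlux (h u : ℝ → ℝ) (r : ℝ) : ℝ :=
  √(h r) ^ 3 * u r / √(1 - h r ^ 2 * u r ^ 2)

theorem div_eq_add_graphFlux_sq {h u : ℝ → ℝ} {s : ℝ} (hh : 0 ≤ h s)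
    (hspc : 0 < 1 - h s ^ 2 * u s ^ 2) :
    h s / (1 - h s ^ 2 * u s ^ 2) = h s + graphFlux h u s ^ 2 := by
  rw [graphFlux, div_pow, mul_pow, ← pow_mul, show 3 * 2 = 2 * 3 from rfl, pow_mul, sq_sqrt hh,
    sq_sqrt hspc.le]
  field_simp
  ring

theorem hasDerivAt_graphFlux {h u : ℝ → ℝ} {h' u' s : ℝ} (hh : HasDerivAt h h' s)
    (hu : HasDerivAt u u' s) (hpos : 0 < h s) (hspc : 0 < 1 - h s ^ 2 * u s ^ 2) :
    HasDerivAt (graphFlux h u) (h s / (1 - h s ^ 2 * u s ^ 2) *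
      ((√(h s) * u' + h' / (2 * √(h s)) * u s * (3 - h s ^ 2 * u s ^ 2)) /
        √(1 - h s ^ 2 * u s ^ 2))) s := by
  have hf0 : √(h s) ≠ 0 := (sqrt_pos.mpr hpos).ne'
  have hD0 : √(1 - h s ^ 2 * u s ^ 2) ≠ 0 := (sqrt_pos.mpr hspc).ne'
  refine ((((hh.sqrt hpos.ne').pow 3).mul hu).div
    (((hh.pow 2).mul (hu.pow 2)).const_sub 1 |>.sqrt hspc.ne') hD0).congr_deriv ?_
  have hD : √(1 - h s ^ 2 * u s ^ 2) ^ 2 = 1 - h s ^ 2 * u s ^ 2 := sq_sqrt hspc.le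
  have hf : h s = √(h s) ^ 2 := (sq_sqrt hpos.le).symm
  simp only [Pi.pow_apply, Pi.mul_apply]
  set f := √(h s)
  set D := √(1 - h s ^ 2 * u s ^ 2)
  clear_value f D
  rw [hf] at hD ⊢
  rw [← hD]
  field_simp
  linear_combination (3 * f ^ 2 * h' * u s + 2 * f ^ 4 * u') * hD

theorem IsOpen.exists_eq_mul_div_add_zpow_of_hasDerivAt {ψ : ℝ → ℝ} {s : Set ℝ} {n : ℤ} {C : ℝ}
    (hs : IsOpen s) (hs' : IsPreconnected s) (h0 : (0 : ℝ) ∉ s) (hn : (n : ℝ) ≠ 0)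
    (hψ : ∀ x ∈ s, HasDerivAt ψ (C - (n - 1) * ψ x / x) x) :
    ∃ c : ℝ, ∀ x ∈ s, ψ x = C * x / n + c * x ^ (1 - n) := by
  -- `x ^ (n - 1)` is an integrating factor
  have hG : ∀ x ∈ s, HasDerivAt (fun x => x ^ (n - 1) * ψ x - C * x ^ n / n) 0 x := by
    intro x hx
    have hx0 : x ≠ 0 := ne_of_mem_of_not_mem hx h0
    refine (((hasDerivAt_zpow (n - 1) x (.inl hx0)).mul (hψ x hx)).sub
      (((hasDerivAt_zpow n x (.inl hx0)).const_mul C).div_const (n : ℝ))).congr_deriv ?_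
    rw [sub_sub, zpow_sub₀ hx0, zpow_sub₀ hx0]
    push_cast
    field_simp
    ring
  obtain ⟨c, hc⟩ := hs.exists_is_const_of_deriv_eq_zero hs'
    (fun x hx => (hG x hx).differentiableAt.differentiableWithinAt) (fun x hx => (hG x hx).deriv)
  refine ⟨c, fun x hx => ?_⟩
  have hx0 : x ≠ 0 := ne_of_mem_of_not_mem hx h0
  have hcx : x ^ (n - 1) * ψ x - C * x ^ n / n = c := hc x hx
  have hxn : x ^ n ≠ 0 := zpow_ne_zero n hx0
  simp only [zpow_sub₀ hx0, zpow_one] at hcx ⊢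
  field_simp at hcx ⊢
  linear_combination hcx

/-- Characterization of constant-mean-curvature spacelike warped product graphs:
if tr K^T = hT·aT + (n−1)·bT ≡ C, then bT = C/n + c₁·s^(−n) and
hT = h + (C·s/n + c₁·s^(1−n))². -/
theorem CMC_spacelike_graph_characterization
    (n : ℤ) (hn : 3 ≤ n)
    (a b : ℝ) (h T hT aT bT : ℝ → ℝ) (C : ℝ)
    (hI : Ioo a b ⊆ Ioi 0)
    (hhsm : ContDiffOn ℝ (⊤ : ℕ∞) h (Ioo a b))
    (hhpos : ∀ s ∈ Ioo a b, 0 < h s)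
    (hTsm : ContDiffOn ℝ (⊤ : ℕ∞) T (Ioo a b))
    (hspc : ∀ s ∈ Ioo a b, 0 < 1 - (h s) ^ 2 * (deriv T s) ^ 2)
    (hhT : ∀ s ∈ Ioo a b, hT s = h s / (1 - (h s) ^ 2 * (deriv T s) ^ 2))
    (haT : ∀ s ∈ Ioo a b, aT s =
      (Real.sqrt (h s) * deriv (deriv T) s +
        deriv (fun r => Real.sqrt (h r)) s * deriv T s * (3 - (h s) ^ 2 * (deriv T s) ^ 2)) /
      Real.sqrt (1 - (h s) ^ 2 * (deriv T s) ^ 2))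
    (hbT : ∀ s ∈ Ioo a b, bT s =
      (Real.sqrt (h s)) ^ 3 * deriv T s / (s * Real.sqrt (1 - (h s) ^ 2 * (deriv T s) ^ 2)))
    (hCMC : ∀ s ∈ Ioo a b, hT s * aT s + ((n : ℝ) - 1) * bT s = C) :
    ∃ c₁ : ℝ, ∀ s ∈ Ioo a b,
      bT s = C / (n : ℝ) + c₁ * s ^ (-n) ∧
      hT s = h s + (C * s / (n : ℝ) + c₁ * s ^ (1 - n)) ^ 2 := by
  have hn0 : (n : ℝ) ≠ 0 := by exact_mod_cast (show n ≠ 0 by omega)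
  have hdT : ContDiffOn ℝ (⊤ : ℕ∞) (deriv T) (Ioo a b) :=
    hTsm.deriv_of_isOpen isOpen_Ioo (by exact_mod_cast le_top)
  have hbT_flux : ∀ s ∈ Ioo a b, bT s = graphFlux h (deriv T) s / s := fun s hs => by
    rw [hbT s hs, graphFlux, div_div, mul_comm s]
  have hflux : ∀ s ∈ Ioo a b, HasDerivAt (graphFlux h (deriv T))
      (C - (n - 1) * graphFlux h (deriv T) s / s) s := by
    intro s hs
    have hs' := isOpen_Ioo.mem_nhds hs
    have hh := ((hhsm.contDiffAt hs').differentiableAt (by simp)).hasDerivAt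
    have hu := ((hdT.contDiffAt hs').differentiableAt (by simp)).hasDerivAt
    refine (hasDerivAt_graphFlux hh hu (hhpos s hs) (hspc s hs)).congr_deriv ?_
    rw [← (hh.sqrt (hhpos s hs).ne').deriv, ← haT s hs, ← hhT s hs, mul_div_assoc,
      ← hbT_flux s hs]
    linarith [hCMC s hs]
  obtain ⟨c₁, hc₁⟩ := isOpen_Ioo.exists_eq_mul_div_add_zpow_of_hasDerivAt isPreconnected_Ioo
    (fun h0 => lt_irrefl (0 : ℝ) (hI h0)) hn0 hflux
  refine ⟨c₁, fun s hs => ⟨?_, ?_⟩⟩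
  · have hs0 : s ≠ 0 := (hI hs).ne'
    rw [hbT_flux s hs, hc₁ s hs, zpow_sub₀ hs0, zpow_neg, zpow_one]
    field_simp
  · rw [hhT s hs, div_eq_add_graphFlux_sq (hhpos s hs).le (hspc s hs), hc₁ s hs]
end

section
/- Let I ⊆ (0,∞) be an open interval, h : I → ℝ smooth and positive, T : I → ℝ smooth with h(s)²·T′(s)² − 1 > 0 on I, and let h_T, a_T, b_T be the coefficient functions of the timelike warped product graph M_T. Then h_T(s)·a_T(s)·b_T(s) = −(h_T′(s) + h′(s))/(2s) for all s ∈ I. (Remark 3.5, second relation for timelike graphs.) -/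
open Set Real Filter Topology

/-! Both sides are rational in `h, h', T', T''` once `√h` and `√(h²T'² - 1)` are squared away.
With `D = h²T'² - 1`, the quotient rule gives
`h_T' + h' = -h²T'(2hT'' + h'T'(3 - h²T'²)) / D²`, and expanding `h_T a_T (s b_T)` yields
`-1/2` times the same expression; `s` enters only through the factor `1/s` of `b_T`. -/

theorem HasDerivAt.div_sq_mul_sq_sub_one {u v : ℝ → ℝ} {u' v' s : ℝ}
    (hu : HasDerivAt u u' s) (hv : HasDerivAt v v' s) (hD : u s ^ 2 * v s ^ 2 - 1 ≠ 0) :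
    HasDerivAt (fun r => u r / (u r ^ 2 * v r ^ 2 - 1))
      (-(u s ^ 2 * v s * (2 * u s * v' + u' * v s * (3 - u s ^ 2 * v s ^ 2))) /
        (u s ^ 2 * v s ^ 2 - 1) ^ 2 - u') s := by
  have hD' : HasDerivAt (fun r => u r ^ 2 * v r ^ 2 - 1)
      (2 * u s ^ 1 * u' * v s ^ 2 + u s ^ 2 * (2 * v s ^ 1 * v')) s :=
    ((hu.pow 2).mul (hv.pow 2)).sub_const 1
  refine (hu.div hD' hD).congr_deriv ?_
  field_simp
  ring

theorem timelike_hT_mul_aT_mul_scaled_bT {u u' v v' : ℝ} (hu : 0 < u)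
    (hD : 0 < u ^ 2 * v ^ 2 - 1) :
    u / (u ^ 2 * v ^ 2 - 1) *
        ((√u * v' + u' / (2 * √u) * v * (3 - u ^ 2 * v ^ 2)) / √(u ^ 2 * v ^ 2 - 1)) *
        (√u ^ 3 * v / √(u ^ 2 * v ^ 2 - 1)) =
      -(-(u ^ 2 * v * (2 * u * v' + u' * v * (3 - u ^ 2 * v ^ 2))) /
        (u ^ 2 * v ^ 2 - 1) ^ 2 / 2) := by
  have hp0 : √u ≠ 0 := (sqrt_pos.mpr hu).ne'
  have hq0 : √(u ^ 2 * v ^ 2 - 1) ≠ 0 := (sqrt_pos.mpr hD).ne'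
  field_simp
  rw [sq_sqrt hD.le, sq_sqrt hu.le]
  ring

theorem timelike_graph_hT_aT_bT_general
    (a b : ℝ) (h T hT aT bT : ℝ → ℝ)
    (hhsm : ContDiffOn ℝ (⊤ : ℕ∞) h (Ioo a b))
    (hhpos : ∀ s ∈ Ioo a b, 0 < h s)
    (hTsm : ContDiffOn ℝ (⊤ : ℕ∞) T (Ioo a b))
    (html : ∀ s ∈ Ioo a b, 0 < (h s) ^ 2 * (deriv T s) ^ 2 - 1)
    (hhT : ∀ s ∈ Ioo a b, hT s = h s / ((h s) ^ 2 * (deriv T s) ^ 2 - 1))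
    (haT : ∀ s ∈ Ioo a b, aT s =
      (Real.sqrt (h s) * deriv (deriv T) s +
        deriv (fun r => Real.sqrt (h r)) s * deriv T s * (3 - (h s) ^ 2 * (deriv T s) ^ 2)) /
      Real.sqrt ((h s) ^ 2 * (deriv T s) ^ 2 - 1))
    (hbT : ∀ s ∈ Ioo a b, bT s =
      (Real.sqrt (h s)) ^ 3 * deriv T s / (s * Real.sqrt ((h s) ^ 2 * (deriv T s) ^ 2 - 1))) :
    ∀ s ∈ Ioo a b, hT s * aT s * bT s = -((deriv hT s + deriv h s) / (2 * s)) := by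
  intro s hs
  have hnhds : Ioo a b ∈ 𝓝 s := isOpen_Ioo.mem_nhds hs
  have hh : HasDerivAt h (deriv h s) s :=
    ((hhsm.contDiffAt hnhds).differentiableAt (by simp)).hasDerivAt
  have hdTsm : ContDiffOn ℝ (⊤ : ℕ∞) (deriv T) (Ioo a b) :=
    hTsm.deriv_of_isOpen isOpen_Ioo (by simp)
  have hdT : HasDerivAt (deriv T) (deriv (deriv T) s) s :=
    ((hdTsm.contDiffAt hnhds).differentiableAt (by simp)).hasDerivAt
  have hhT_deriv := (hh.div_sq_mul_sq_sub_one hdT (html s hs).ne').congr_of_eventuallyEq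
    (eventuallyEq_of_mem hnhds hhT)
  rw [hhT_deriv.deriv, hh.deriv, sub_add_cancel, hbT s hs, div_mul_eq_div_div_swap, mul_div_assoc',
    hhT s hs, haT s hs, (hh.sqrt (hhpos s hs).ne').deriv,
    timelike_hT_mul_aT_mul_scaled_bT (hhpos s hs) (html s hs), neg_div, div_div]

/-- Remark 3.5, second relation for timelike warped product graphs:
hT·aT·bT = −(hT′ + h′)/(2s). -/
theorem timelike_graph_hT_aT_bT
    (a b : ℝ) (h T hT aT bT : ℝ → ℝ)
    (hI : Ioo a b ⊆ Ioi 0)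
    (hhsm : ContDiffOn ℝ (⊤ : ℕ∞) h (Ioo a b))
    (hhpos : ∀ s ∈ Ioo a b, 0 < h s)
    (hTsm : ContDiffOn ℝ (⊤ : ℕ∞) T (Ioo a b))
    (html : ∀ s ∈ Ioo a b, 0 < (h s) ^ 2 * (deriv T s) ^ 2 - 1)
    (hhT : ∀ s ∈ Ioo a b, hT s = h s / ((h s) ^ 2 * (deriv T s) ^ 2 - 1))
    (haT : ∀ s ∈ Ioo a b, aT s =
      (Real.sqrt (h s) * deriv (deriv T) s +
        deriv (fun r => Real.sqrt (h r)) s * deriv T s * (3 - (h s) ^ 2 * (deriv T s) ^ 2)) /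
      Real.sqrt ((h s) ^ 2 * (deriv T s) ^ 2 - 1))
    (hbT : ∀ s ∈ Ioo a b, bT s =
      (Real.sqrt (h s)) ^ 3 * deriv T s / (s * Real.sqrt ((h s) ^ 2 * (deriv T s) ^ 2 - 1))) :
    ∀ s ∈ Ioo a b, hT s * aT s * bT s = -((deriv hT s + deriv h s) / (2 * s)) :=
  timelike_graph_hT_aT_bT_general a b h T hT aT bT hhsm hhpos hTsm html hhT haT hbT
end

section
/- Let I ⊆ (0,∞) be an open interval, h : I → ℝ smooth and positive, T : I → ℝ smooth with h(s)²·T′(s)² − 1 > 0 on I, and let h_T, a_T, b_T be the coefficient functions of the timelike warped product graph M_T. If the graph is totally umbilic, i.e. h_T(s)·a_T(s) = −b_T(s) for all s ∈ I (so that K_T = b_T·g_T), then b_T is a nonzero constant λ_T on I and h_T(s) + h(s) = λ_T²·s² for all s ∈ I. (Remark 3.5: totally umbilic timelike warped product graphs satisfy h_T = λ_T²·s² − h with λ_T ≠ 0 constant, the ODE system characterizing rotationally symmetric photon surfaces.) -/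
/-!
Along the graph, the Codazzi equation reads `b_T' = -(h_T a_T + b_T) / s`, so umbilicity makes
`b_T` locally constant, hence constant on the interval. Independently of umbilicity,
`h_T + h = b_T² s²` holds pointwise, both sides being `h³ T'² / (h² T'² - 1)`, and `b_T ≠ 0`
because timelikeness forces `T' ≠ 0`.
-/

open Set Real

namespace TimelikeGraph

variable (h T : ℝ → ℝ)

noncomputable def hT (s : ℝ) : ℝ := h s / (h s ^ 2 * deriv T s ^ 2 - 1)

-- `√h` is the function `f` of the paper.
noncomputable def aT (s : ℝ) : ℝ :=
  (√(h s) * deriv (deriv T) s +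
      deriv (fun r => √(h r)) s * deriv T s * (3 - h s ^ 2 * deriv T s ^ 2)) /
    √(h s ^ 2 * deriv T s ^ 2 - 1)

noncomputable def bT (s : ℝ) : ℝ :=
  √(h s) ^ 3 * deriv T s / (s * √(h s ^ 2 * deriv T s ^ 2 - 1))

variable {h T} {s : ℝ}

theorem hasDerivAt_bT (hs : 0 < s) (hh : 0 < h s) (hD : 0 < h s ^ 2 * deriv T s ^ 2 - 1)
    (hhd : DifferentiableAt ℝ h s) (hTd : DifferentiableAt ℝ (deriv T) s) :
    HasDerivAt (bT h T) (-(hT h T s * aT h T s + bT h T s) / s) s := by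
  have hf := hhd.hasDerivAt.sqrt hh.ne'
  have hW :=
    (((hhd.hasDerivAt.fun_pow 2).fun_mul (hTd.hasDerivAt.fun_pow 2)).sub_const 1).sqrt hD.ne'
  have hb : HasDerivAt (bT h T) _ s :=
    ((hf.fun_pow 3).fun_mul hTd.hasDerivAt).fun_div ((hasDerivAt_id' s).fun_mul hW)
      (mul_pos hs (sqrt_pos.2 hD)).ne'
  convert hb using 1
  rw [hT, aT, bT, hf.deriv]
  have hf2 := sq_sqrt hh.le
  have hW2 := sq_sqrt hD.le
  have hf0 : √(h s) ≠ 0 := (sqrt_pos.2 hh).ne'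
  have hW0 : √(h s ^ 2 * deriv T s ^ 2 - 1) ≠ 0 := (sqrt_pos.2 hD).ne'
  have hf4 : √(h s) ^ 4 = h s ^ 2 := by rw [pow_mul' _ 2 2, hf2]
  field_simp
  norm_num only [hW2, hf2, hf4]
  ring

theorem hT_add_eq_bT_sq_mul_sq (hs : s ≠ 0) (hh : 0 ≤ h s)
    (hD : 0 < h s ^ 2 * deriv T s ^ 2 - 1) :
    hT h T s + h s = bT h T s ^ 2 * s ^ 2 := by
  have hf6 : (√(h s) ^ 3) ^ 2 = h s ^ 3 := by rw [pow_right_comm, sq_sqrt hh]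
  rw [hT, bT, div_pow, mul_pow, mul_pow, hf6, sq_sqrt hD.le]
  field_simp
  ring

theorem bT_ne_zero (hs : s ≠ 0) (hh : 0 < h s) (hD : 0 < h s ^ 2 * deriv T s ^ 2 - 1) :
    bT h T s ≠ 0 := by
  have hP : deriv T s ≠ 0 := fun h0 => by norm_num [h0] at hD
  have hf := sqrt_pos.2 hh
  have hW := sqrt_pos.2 hD
  unfold bT
  positivity

end TimelikeGraph

/-- Remark 3.5: totally umbilic timelike warped product graphs satisfy
hT = λT²·s² − h with λT ≠ 0 constant. -/
theorem totally_umbilic_timelike_graph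
    (a b : ℝ) (h T hT aT bT : ℝ → ℝ)
    (hI : Ioo a b ⊆ Ioi 0)
    (hhsm : ContDiffOn ℝ (⊤ : ℕ∞) h (Ioo a b))
    (hhpos : ∀ s ∈ Ioo a b, 0 < h s)
    (hTsm : ContDiffOn ℝ (⊤ : ℕ∞) T (Ioo a b))
    (html : ∀ s ∈ Ioo a b, 0 < (h s) ^ 2 * (deriv T s) ^ 2 - 1)
    (hhT : ∀ s ∈ Ioo a b, hT s = h s / ((h s) ^ 2 * (deriv T s) ^ 2 - 1))
    (haT : ∀ s ∈ Ioo a b, aT s =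
      (Real.sqrt (h s) * deriv (deriv T) s +
        deriv (fun r => Real.sqrt (h r)) s * deriv T s * (3 - (h s) ^ 2 * (deriv T s) ^ 2)) /
      Real.sqrt ((h s) ^ 2 * (deriv T s) ^ 2 - 1))
    (hbT : ∀ s ∈ Ioo a b, bT s =
      (Real.sqrt (h s)) ^ 3 * deriv T s / (s * Real.sqrt ((h s) ^ 2 * (deriv T s) ^ 2 - 1)))
    (humb : ∀ s ∈ Ioo a b, hT s * aT s = -(bT s)) :
    ∃ lamT : ℝ, lamT ≠ 0 ∧ ∀ s ∈ Ioo a b,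
      bT s = lamT ∧ hT s + h s = lamT ^ 2 * s ^ 2 := by
  have hT_eq : EqOn hT (TimelikeGraph.hT h T) (Ioo a b) := hhT
  have aT_eq : EqOn aT (TimelikeGraph.aT h T) (Ioo a b) := haT
  have bT_eq : EqOn bT (TimelikeGraph.bT h T) (Ioo a b) := hbT
  have hdTsm : ContDiffOn ℝ (⊤ : ℕ∞) (deriv T) (Ioo a b) :=
    hTsm.deriv_of_isOpen isOpen_Ioo (by simp)
  have hb' : ∀ s ∈ Ioo a b, HasDerivAt (TimelikeGraph.bT h T) 0 s := fun s hs => by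
    have hd := TimelikeGraph.hasDerivAt_bT (hI hs) (hhpos s hs) (html s hs)
      ((hhsm.differentiableOn (by simp)).differentiableAt (isOpen_Ioo.mem_nhds hs))
      ((hdTsm.differentiableOn (by simp)).differentiableAt (isOpen_Ioo.mem_nhds hs))
    rwa [← hT_eq hs, ← aT_eq hs, ← bT_eq hs, humb s hs, neg_add_cancel, neg_zero, zero_div]
      at hd
  obtain hempty | ⟨s₀, hs₀⟩ := (Ioo a b).eq_empty_or_nonempty
  · exact ⟨1, one_ne_zero, by simp [hempty]⟩
  have hconst : ∀ s ∈ Ioo a b, TimelikeGraph.bT h T s = TimelikeGraph.bT h T s₀ := fun s hs =>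
    isOpen_Ioo.is_const_of_deriv_eq_zero isPreconnected_Ioo
      (fun x hx => (hb' x hx).differentiableAt.differentiableWithinAt)
      (fun x hx => (hb' x hx).deriv) hs hs₀
  refine ⟨_, TimelikeGraph.bT_ne_zero (hI hs₀).ne' (hhpos s₀ hs₀) (html s₀ hs₀),
    fun s hs => ⟨(bT_eq hs).trans (hconst s hs), ?_⟩⟩
  rw [hT_eq hs, ← hconst s hs]
  exact TimelikeGraph.hT_add_eq_bT_sq_mul_sq (hI hs).ne' (hhpos s hs).le (html s hs)
end
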